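/- cof(B_M) ≤ 𝔡: there exists a family C of meager downward-closed subsets of [ω]^ω with |C| ≤ 𝔡 such that every meager downward-closed subset of [ω]^ω is included in some member of C. -/

import Mathlib

open Set Cardinal MeasureTheory

/-- The characteristic function of a set of naturals, as a point of Cantor space `2^ω`. -/
noncomputable def chi (x : Set ℕ) : ℕ → Bool := fun n => @decide (n ∈ x) (Classical.dec _)

/-- `[ω]^ω`: the collection of infinite subsets of ω. -/
def InfSets : Set (Set ℕ) := {x : Set ℕ | x.Infinite}

/-- `X ⊆ [ω]^ω` is downward closed for almost-inclusion `x ≤ y ↔ (x \ y).Finite`. -/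
def DownClosed (X : Set (Set ℕ)) : Prop :=
  ∀ y ∈ X, ∀ x : Set ℕ, x.Infinite → (x \ y).Finite → x ∈ X

/-- `X` is meager as a subset of Cantor space `2^ω` (product topology on `ℕ → Bool`). -/
def MeagerSet (X : Set (Set ℕ)) : Prop := IsMeagre (chi '' X)

/-- A partition of ω into consecutive finite intervals `I n = [e n, e (n+1))`. -/
structure IntervalPartition where
  e : ℕ → ℕ
  zero : e 0 = 0
  mono : StrictMono e

/-- The `n`-th interval of an interval partition. -/
def IntervalPartition.I (P : IntervalPartition) (n : ℕ) : Set ℕ :=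
  Set.Ico (P.e n) (P.e (n + 1))

/-- `X ⊆ [ω]^ω` is groupwise dense: downward closed, and for every partition of ω into
finite intervals, the union of some infinitely many of the intervals belongs to `X`. -/
def GroupwiseDense (X : Set (Set ℕ)) : Prop :=
  X ⊆ InfSets ∧ DownClosed X ∧
    ∀ P : IntervalPartition, ∃ A : Set ℕ, A.Infinite ∧ (⋃ n ∈ A, P.I n) ∈ X

/-- `g` eventually majorizes `f`. -/
def EvMaj (f g : ℕ → ℕ) : Prop := ∀ᶠ k in Filter.atTop, f k ≤ g k

/-- `M(Π)`: the infinite subsets of ω including only finitely many intervals of `Π`. -/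
def MSet (P : IntervalPartition) : Set (Set ℕ) :=
  {x : Set ℕ | x.Infinite ∧ {n : ℕ | P.I n ⊆ x}.Finite}

/-- The index `n` of the interval `I n` of `P` containing `k`. -/
def idx (P : IntervalPartition) (k : ℕ) : ℕ := Nat.findGreatest (fun n => P.e n ≤ k) k

/-- `F_Π(k)`: the largest element of `I (n+2)`, where `k ∈ I n`. -/
def FPart (P : IntervalPartition) (k : ℕ) : ℕ := P.e (idx P k + 3) - 1

/-- The groupwise density number 𝔤. -/
noncomputable def gNum : Cardinal :=
  sInf {c : Cardinal | ∃ S : Set (Set (Set ℕ)), (∀ G ∈ S, GroupwiseDense G) ∧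
    #S = c ∧ InfSets ∩ ⋂₀ S = ∅}

/-- The bounding number 𝔟. -/
noncomputable def bNum : Cardinal :=
  sInf {c : Cardinal | ∃ F : Set (ℕ → ℕ), #F = c ∧ ∀ g : ℕ → ℕ, ∃ f ∈ F, ¬ EvMaj f g}

/-- The dominating number 𝔡. -/
noncomputable def dNum : Cardinal :=
  sInf {c : Cardinal | ∃ F : Set (ℕ → ℕ), #F = c ∧ ∀ g : ℕ → ℕ, ∃ f ∈ F, EvMaj g f}

/-- `B_M`: the ideal of meager downward-closed subsets of `[ω]^ω`. -/
def BM : Set (Set (Set ℕ)) := {X : Set (Set ℕ) | X ⊆ InfSets ∧ DownClosed X ∧ MeagerSet X}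

/-- `add(B_M)`. -/
noncomputable def addBM : Cardinal :=
  sInf {c : Cardinal | ∃ S : Set (Set (Set ℕ)), S ⊆ BM ∧ #S = c ∧ ⋃₀ S ∉ BM}

/-- `cov(B_M)`. -/
noncomputable def covBM : Cardinal :=
  sInf {c : Cardinal | ∃ S : Set (Set (Set ℕ)), S ⊆ BM ∧ #S = c ∧
    {x : Set ℕ | x.Infinite ∧ xᶜ.Infinite} ⊆ ⋃₀ S}

/-- `unif(B_M)`. -/
noncomputable def unifBM : Cardinal :=
  sInf {c : Cardinal | ∃ S : Set (Set ℕ), (∀ x ∈ S, x.Infinite ∧ xᶜ.Infinite) ∧ #S = c ∧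
    ∀ X ∈ BM, ¬ S ⊆ X}

/-- `cof(B_M)`. -/
noncomputable def cofBM : Cardinal :=
  sInf {c : Cardinal | ∃ C : Set (Set (Set ℕ)), C ⊆ BM ∧ #C = c ∧
    ∀ X ∈ BM, ∃ Y ∈ C, X ⊆ Y}

/-- `X ⊆ [ω]^ω` is dense: every infinite `A` has an infinite subset `B ∈ X`. -/
def DenseM (X : Set (Set ℕ)) : Prop :=
  ∀ A : Set ℕ, A.Infinite → ∃ B ⊆ A, B.Infinite ∧ B ∈ X

/-- 𝔤′: the least number of non-meager downward-closed ideals on ω with empty intersection. -/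
noncomputable def gNum' : Cardinal :=
  sInf {c : Cardinal | ∃ S : Set (Set (Set ℕ)),
    (∀ X ∈ S, X ⊆ InfSets ∧ DownClosed X ∧ (∀ x ∈ X, ∀ y ∈ X, x ∪ y ∈ X) ∧ ¬ MeagerSet X) ∧
    #S = c ∧ InfSets ∩ ⋂₀ S = ∅}

/-- The splitting number 𝔰. -/
noncomputable def sNum : Cardinal :=
  sInf {c : Cardinal | ∃ S : Set (Set ℕ), #S = c ∧
    ∀ x : Set ℕ, x.Infinite → ∃ y ∈ S, (x ∩ y).Infinite ∧ (x \ y).Infinite}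

/-! A meagre set `M ⊆ 2^ω` misses `⋂ₙ Uₙ` for dense open `Uₙ`. Choosing the interval partition `Π`
so that every initial segment of length `eₙ` extends across `Iₙ` into a cylinder inside
`U₀ ∩ ⋯ ∩ Uₙ`, any `x` including infinitely many intervals of `Π` has a subset `y` with
`χ_y ∉ M` (Baire). For `M = χ[X] ∪ {finite sets}` and `X` downward closed this gives Talagrand's
`X ⊆ M(Π)`. Each `M(Π)` is meagre and downward closed, and `M(Π) ⊆ M(Π')` as soon as almost
every interval of `Π'` includes one of `Π`; this holds for the partition `Π'` grown by any `g`
eventually majorizing `k ↦ e_Π(k+1)`, so a dominating family indexes a cofinal subfamily. -/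

open Filter PiNat

namespace PiNat

variable {E : ℕ → Type*} [∀ n, TopologicalSpace (E n)] [∀ n, DiscreteTopology (E n)]

theorem dense_iff_forall_cylinder {D : Set (∀ n, E n)} :
    Dense D ↔ ∀ σ N, (cylinder σ N ∩ D).Nonempty := by
  rw [(isTopologicalBasis_cylinders E).dense_iff]
  constructor
  · exact fun h σ N => h _ ⟨σ, N, rfl⟩ ⟨σ, self_mem_cylinder σ N⟩
  · rintro h _ ⟨σ, N, rfl⟩ -
    exact h σ N

theorem exists_cylinder_subset_of_isOpen {U : Set (∀ n, E n)} (hU : IsOpen U) {f : ∀ n, E n}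
    (hf : f ∈ U) : ∃ N, cylinder f N ⊆ U := by
  obtain ⟨_, ⟨σ, N, rfl⟩, hfσ, hσU⟩ :=
    (isTopologicalBasis_cylinders E).exists_subset_of_mem_open hf hU
  exact ⟨N, mem_cylinder_iff_eq.mp hfσ ▸ hσU⟩

theorem isMeagre_eventually_notMem {G : ℕ → Set (∀ n, E n)} (hGo : ∀ m, IsOpen (G m))
    (hGd : ∀ σ N, ∀ᶠ m in atTop, (cylinder σ N ∩ G m).Nonempty) :
    IsMeagre {f | ∀ᶠ m in atTop, f ∉ G m} := by
  have hcompl : {f | ∀ᶠ m in atTop, f ∉ G m}ᶜ = ⋂ n, ⋃ m ≥ n, G m := by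
    ext f
    simp
  rw [IsMeagre, hcompl]
  refine countable_iInter_mem.mpr fun n =>
    residual_of_dense_open (isOpen_biUnion fun m _ => hGo m) (dense_iff_forall_cylinder.mpr ?_)
  intro σ N
  obtain ⟨m, ⟨g, hgσ, hgG⟩, hnm⟩ := ((hGd σ N).and (eventually_ge_atTop n)).exists
  exact ⟨g, hgσ, mem_biUnion hnm hgG⟩

end PiNat

theorem isOpen_setOf_apply_eq_true (k : ℕ) : IsOpen {f : ℕ → Bool | f k = true} :=
  (isOpen_discrete {true}).preimage (continuous_apply (A := fun _ => Bool) k)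

theorem isMeagre_eventually_eq_false : IsMeagre {f : ℕ → Bool | ∀ᶠ k in atTop, f k = false} := by
  have hG := isMeagre_eventually_notMem (G := fun k => {f : ℕ → Bool | f k = true})
    isOpen_setOf_apply_eq_true
    (fun σ N => eventually_atTop.mpr ⟨N, fun k hk =>
      ⟨Function.update σ k true, cylinder_anti σ hk (update_mem_cylinder σ k true), by simp⟩⟩)
  simpa using hG

theorem exists_uniform_cylinder_subset {D : Set (ℕ → Bool)} (hDo : IsOpen D) (hDd : Dense D)
    (N : ℕ) : ∃ M, N < M ∧ ∀ σ, ∃ τ ∈ cylinder σ N, cylinder τ M ⊆ D := by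
  have hesc : ∀ σ : ℕ → Bool, ∃ τ ∈ cylinder σ N, ∃ M, cylinder τ M ⊆ D := fun σ => by
    obtain ⟨τ, hτσ, hτD⟩ := dense_iff_forall_cylinder.mp hDd σ N
    exact ⟨τ, hτσ, exists_cylinder_subset_of_isOpen hDo hτD⟩
  choose τ hτσ M hM using hesc
  let extend : (Fin N → Bool) → ℕ → Bool := fun s k => if h : k < N then s ⟨k, h⟩ else false
  obtain ⟨B, hB⟩ := (Set.finite_range fun s => M (extend s)).bddAbove
  refine ⟨max N B + 1, by omega, fun σ => ⟨τ (extend fun i => σ i), ?_, ?_⟩⟩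
  · have hext : extend (fun i => σ i) ∈ cylinder σ N := fun k hk => by simp [extend, hk]
    exact (mem_cylinder_iff_eq.mp hext) ▸ hτσ _
  · exact (cylinder_anti _ ((hB ⟨fun i => σ i, rfl⟩).trans (by omega))).trans (hM _)

theorem exists_intervalPartition_cylinder_subset {D : ℕ → Set (ℕ → Bool)}
    (hDo : ∀ m, IsOpen (D m)) (hDd : ∀ m, Dense (D m)) :
    ∃ P : IntervalPartition, ∀ m σ, ∃ τ ∈ cylinder σ (P.e m), cylinder τ (P.e (m + 1)) ⊆ D m := by
  choose M hM hMD using fun m => exists_uniform_cylinder_subset (hDo m) (hDd m)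
  let e : ℕ → ℕ := fun m => Nat.rec 0 (fun m em => M m em) m
  exact ⟨⟨e, rfl, strictMono_nat_of_lt_succ fun m => hM m (e m)⟩, fun m => hMD m (e m)⟩

theorem chi_apply_eq_true {x : Set ℕ} {k : ℕ} : chi x k = true ↔ k ∈ x := by
  simp [chi]

theorem chi_setOf_eq_true (f : ℕ → Bool) : chi {k | f k = true} = f := by
  ext k
  simp [chi]

theorem exists_intervalPartition_forall_exists_subset_notMem {M : Set (ℕ → Bool)}
    (hM : IsMeagre M) : ∃ P : IntervalPartition, ∀ x : Set ℕ, {n | P.I n ⊆ x}.Infinite →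
      ∃ f ∉ M, ∀ k, f k = true → k ∈ x := by
  obtain ⟨t, htM, htGδ, htd⟩ := mem_residual.mp hM
  obtain ⟨U, hUo, rfl⟩ := isGδ_iff_eq_iInter_nat.mp htGδ
  let V : ℕ → Set (ℕ → Bool) := fun m => ⋂ i ∈ Set.Iic m, U i
  have hVU : ∀ {n m}, n ≤ m → V m ⊆ U n := fun h => biInter_subset_of_mem (mem_Iic.mpr h)
  obtain ⟨P, hP⟩ := exists_intervalPartition_cylinder_subset
    (fun m => (finite_Iic m).isOpen_biInter fun i _ => hUo i)
    (fun m => htd.mono (subset_iInter₂ fun i _ => iInter_subset U i))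
  refine ⟨P, fun x hx => ?_⟩
  -- Restricting to `x` is continuous, and it can be steered into each `U n` on an interval
  -- of `P` included in `x`; by Baire a restriction lies in all of them.
  let restrict : (ℕ → Bool) → ℕ → Bool := fun g k => g k && chi x k
  have hcont : Continuous restrict :=
    continuous_pi fun k =>
      (continuous_of_discreteTopology (f := fun b => b && chi x k)).comp (continuous_apply k)
  have hdense : ∀ n, Dense (restrict ⁻¹' U n) := by
    intro n
    refine dense_iff_forall_cylinder.mpr fun σ N => ?_
    obtain ⟨m, hmx, hm⟩ := hx.exists_gt (max n N)
    obtain ⟨τ, hτσ, hτV⟩ := hP m (restrict σ)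
    refine ⟨fun k => if k < P.e m then σ k else τ k, fun k hk => ?_, hVU (by omega) (hτV ?_)⟩
    · have : k < P.e m := hk.trans_le ((le_max_right n N).trans (hm.le.trans P.mono.le_apply))
      simp [this]
    · intro k hk
      by_cases hkm : k < P.e m
      · simp only [restrict, hkm, if_true]
        exact (hτσ k hkm).symm
      · have : chi x k = true := chi_apply_eq_true.mpr (hmx ⟨not_lt.mp hkm, hk⟩)
        simp [restrict, hkm, this]
  obtain ⟨g, hg⟩ := (dense_iInter_of_isOpen_nat (fun n => (hUo n).preimage hcont) hdense).nonempty
  refine ⟨restrict g, fun hgM => htM (by simpa using hg) hgM, fun k hk => ?_⟩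
  simp only [restrict, Bool.and_eq_true] at hk
  exact chi_apply_eq_true.mp hk.2

namespace IntervalPartition

variable (P : IntervalPartition)

theorem e_mem_I (n : ℕ) : P.e n ∈ P.I n := ⟨le_rfl, P.mono n.lt_succ_self⟩

variable {P}

theorem eq_of_mem_I {k n n' : ℕ} (h : k ∈ P.I n) (h' : k ∈ P.I n') : n = n' := by
  have hlt : ∀ {a b}, k ∈ P.I a → k ∈ P.I b → ¬ a < b := fun ha hb hab =>
    (ha.2.trans_le (P.mono.monotone hab)).not_ge hb.1
  exact le_antisymm (not_lt.mp (hlt h' h)) (not_lt.mp (hlt h h'))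

theorem eventually_disjoint_I {s : Set ℕ} (hs : s.Finite) :
    ∀ᶠ n in atTop, Disjoint (P.I n) s := by
  obtain ⟨B, hB⟩ := hs.bddAbove
  filter_upwards [eventually_gt_atTop B] with n hn
  exact Set.disjoint_left.mpr fun k hk hks =>
    (hB hks).not_gt (hn.trans_le (P.mono.le_apply.trans hk.1))

def ofGrowth (g : ℕ → ℕ) : IntervalPartition where
  e n := Nat.rec 0 (fun _ k => k + g k + 1) n
  zero := rfl
  mono := strictMono_nat_of_lt_succ fun _ => Nat.lt_succ_of_le (Nat.le_add_right _ _)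

theorem eventually_exists_I_subset_ofGrowth {g : ℕ → ℕ} (hg : EvMaj (fun k => P.e (k + 1)) g) :
    ∀ᶠ n in atTop, ∃ m, P.I m ⊆ (ofGrowth g).I n := by
  obtain ⟨K, hK⟩ := eventually_atTop.mp hg
  filter_upwards [eventually_ge_atTop K] with n hn
  have hk : n ≤ (ofGrowth g).e n := (ofGrowth g).mono.le_apply
  refine ⟨(ofGrowth g).e n, fun j hj => ⟨P.mono.le_apply.trans hj.1, ?_⟩⟩
  have : P.e ((ofGrowth g).e n + 1) ≤ g ((ofGrowth g).e n) := hK _ (hn.trans hk)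
  have hj2 := hj.2
  change j < (ofGrowth g).e n + g ((ofGrowth g).e n) + 1
  omega

end IntervalPartition

open IntervalPartition

theorem downClosed_mSet (P : IntervalPartition) : DownClosed (MSet P) := by
  rintro y ⟨-, hy⟩ x hx hxy
  refine ⟨hx, Set.not_infinite.mp fun hxP => ?_⟩
  have hy' : ∀ᶠ n in atTop, ¬ P.I n ⊆ y :=
    not_frequently.mp (Nat.frequently_atTop_iff_infinite.not.mpr (Set.not_infinite.mpr hy))
  obtain ⟨n, hnx, hny, hdisj⟩ := ((Nat.frequently_atTop_iff_infinite.mpr hxP).and_eventually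
    (hy'.and (eventually_disjoint_I hxy))).exists
  exact hny fun k hk => by_contra fun hky => Set.disjoint_left.mp hdisj hk ⟨hnx hk, hky⟩

theorem meagerSet_mSet (P : IntervalPartition) : MeagerSet (MSet P) := by
  refine (isMeagre_eventually_notMem (G := fun n => ⋂ k ∈ P.I n, {f : ℕ → Bool | f k = true})
    (fun n => (finite_Ico _ _).isOpen_biInter fun k _ => isOpen_setOf_apply_eq_true k)
    (fun σ N => ?_)).mono ?_
  · filter_upwards [eventually_ge_atTop N] with m hm
    refine ⟨fun k => decide (P.e m ≤ k) || σ k, fun k hk => ?_, ?_⟩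
    · have : ¬ P.e m ≤ k := not_le.mpr (hk.trans_le (hm.trans P.mono.le_apply))
      simp [this]
    · simp only [mem_iInter₂, mem_ofPred_eq, Bool.or_eq_true, decide_eq_true_eq]
      exact fun k hk => Or.inl hk.1
  · rintro _ ⟨x, ⟨-, hx⟩, rfl⟩
    filter_upwards [Nat.cofinite_eq_atTop ▸ hx.eventually_cofinite_notMem] with n hn hchi
    exact hn fun k hk => chi_apply_eq_true.mp (mem_iInter₂.mp hchi k hk)

theorem mSet_subset_mSet {P Q : IntervalPartition} (h : ∀ᶠ n in atTop, ∃ m, P.I m ⊆ Q.I n) :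
    MSet P ⊆ MSet Q := by
  rintro x ⟨hx, hPx⟩
  obtain ⟨N, hN⟩ := eventually_atTop.mp h
  have hcover : {n | Q.I n ⊆ x} ⊆ Iio N ∪ ⋃ m ∈ {m | P.I m ⊆ x}, {n | P.e m ∈ Q.I n} := by
    intro n hnx
    rcases lt_or_ge n N with hn | hn
    · exact Or.inl hn
    · obtain ⟨m, hm⟩ := hN n hn
      exact Or.inr (mem_biUnion (hm.trans hnx) (hm (e_mem_I P m)))
  refine ⟨hx, ((finite_Iio N).union (hPx.biUnion fun m _ => ?_)).subset hcover⟩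
  exact Set.Subsingleton.finite fun a ha b hb => eq_of_mem_I ha hb

theorem exists_subset_mSet_of_meagerSet {X : Set (Set ℕ)} (hX : X ⊆ InfSets) (hdc : DownClosed X)
    (hm : MeagerSet X) : ∃ P, X ⊆ MSet P := by
  obtain ⟨P, hP⟩ :=
    exists_intervalPartition_forall_exists_subset_notMem (hm.union isMeagre_eventually_eq_false)
  refine ⟨P, fun x hx => ⟨hX hx, Set.not_infinite.mp fun hxP => ?_⟩⟩
  obtain ⟨f, hfM, hfx⟩ := hP x hxP
  have hinf : {k | f k = true}.Infinite := fun hfin => hfM <| Or.inr <|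
    (Nat.cofinite_eq_atTop ▸ hfin.eventually_cofinite_notMem).mono fun k hk => by simpa using hk
  have hfX : {k | f k = true} ∈ X :=
    hdc x hx _ hinf (finite_empty.subset fun k hk => hk.2 (hfx k hk.1))
  exact hfM (Or.inl ⟨_, hfX, chi_setOf_eq_true f⟩)

theorem exists_dominating_family_card_eq_dNum :
    ∃ F : Set (ℕ → ℕ), #F = dNum ∧ ∀ g, ∃ f ∈ F, EvMaj g f := by
  show dNum ∈ {c | ∃ F : Set (ℕ → ℕ), #F = c ∧ ∀ g, ∃ f ∈ F, EvMaj g f}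
  exact csInf_mem ⟨_, univ, rfl, fun g => ⟨g, mem_univ g, Eventually.of_forall fun _ => le_rfl⟩⟩

/-- cof(B_M) ≤ 𝔡. -/
theorem stmt7 :
    ∃ C : Set (Set (Set ℕ)), #C ≤ dNum ∧
      (∀ Y ∈ C, Y ⊆ InfSets ∧ DownClosed Y ∧ MeagerSet Y) ∧
      ∀ X : Set (Set ℕ), X ⊆ InfSets → DownClosed X → MeagerSet X → ∃ Y ∈ C, X ⊆ Y := by
  obtain ⟨F, hFcard, hFdom⟩ := exists_dominating_family_card_eq_dNum
  refine ⟨(fun g => MSet (ofGrowth g)) '' F, mk_image_le.trans hFcard.le, ?_, ?_⟩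
  · rintro _ ⟨g, -, rfl⟩
    exact ⟨fun _ hx => hx.1, downClosed_mSet _, meagerSet_mSet _⟩
  · intro X hX hdc hm
    obtain ⟨P, hXP⟩ := exists_subset_mSet_of_meagerSet hX hdc hm
    obtain ⟨g, hgF, hg⟩ := hFdom fun k => P.e (k + 1)
    exact ⟨_, mem_image_of_mem _ hgF,
      hXP.trans (mSet_subset_mSet (eventually_exists_I_subset_ofGrowth hg))⟩
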